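/- The MMI inequality follows from the abstract contraction framework: if γ : {0,1}^3 × {0,1}^3 → ℝ≥0 is symmetric, and we define for each r ∈ {1,2,3,4} the quantity C_r := Σ_{x<y} |f_r(x) − f_r(y)| γ(x,y) using the MMI contraction map f, and A_l := Σ_{x<y} |x_l − y_l| γ(x,y) for l ∈ {1,2,3}, then A_1 + A_2 + A_3 ≥ C_1 + C_2 + C_3 + C_4. -/
import Mathlib


/-- The MMI contraction map `f : {0,1}^3 → {0,1}^4`. -/
def mmiMap (x : Fin 3 → Fin 2) : Fin 4 → Fin 2 :=
  ![if x = ![0, 1, 1] then 1 else 0,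
    if x = ![1, 0, 1] then 1 else 0,
    if x = ![1, 1, 0] then 1 else 0,
    if x = ![0, 0, 0] then 0 else 1]

def bval {L : ℕ} (x : Fin L → Fin 2) : ℕ := ∑ l, (x l : ℕ) * 2 ^ (l : ℕ)

lemma mmi_key : ∀ x y : Fin 3 → Fin 2,
    ((mmiMap x 0 : ℤ) - (mmiMap y 0 : ℤ)).natAbs +
    ((mmiMap x 1 : ℤ) - (mmiMap y 1 : ℤ)).natAbs +
    ((mmiMap x 2 : ℤ) - (mmiMap y 2 : ℤ)).natAbs +
    ((mmiMap x 3 : ℤ) - (mmiMap y 3 : ℤ)).natAbs ≤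
    ((x 0 : ℤ) - (y 0 : ℤ)).natAbs + ((x 1 : ℤ) - (y 1 : ℤ)).natAbs +
    ((x 2 : ℤ) - (y 2 : ℤ)).natAbs := by decide

/-- MMI from the abstract contraction framework:
`A_1 + A_2 + A_3 ≥ C_1 + C_2 + C_3 + C_4` for any symmetric nonnegative `γ`. -/
theorem mmi_from_contraction
    (γ : (Fin 3 → Fin 2) → (Fin 3 → Fin 2) → ℝ)
    (hγ0 : ∀ x y, 0 ≤ γ x y) (hγs : ∀ x y, γ x y = γ y x)
    (A : Fin 3 → ℝ) (C : Fin 4 → ℝ)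
    (hA : ∀ l, A l = ∑ x : Fin 3 → Fin 2, ∑ y : Fin 3 → Fin 2,
      if bval x < bval y then (((x l : ℤ) - (y l : ℤ)).natAbs : ℝ) * γ x y else 0)
    (hC : ∀ r, C r = ∑ x : Fin 3 → Fin 2, ∑ y : Fin 3 → Fin 2,
      if bval x < bval y then (((mmiMap x r : ℤ) - (mmiMap y r : ℤ)).natAbs : ℝ) * γ x y else 0) :
    C 0 + C 1 + C 2 + C 3 ≤ A 0 + A 1 + A 2 := by
  simp only [hA, hC, ← Finset.sum_add_distrib]
  apply Finset.sum_le_sum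
  intro x _
  apply Finset.sum_le_sum
  intro y _
  split_ifs with h
  · have key := mmi_key x y
    have hg := hγ0 x y
    rw [← add_mul, ← add_mul, ← add_mul, ← add_mul, ← add_mul]
    apply mul_le_mul_of_nonneg_right _ hg
    push_cast
    exact_mod_cast key
  · simp
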